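/- Let V ⊆ ℂⁿ be open, Φ : V → ℝ continuous, Ψ̃ : V × V → ℂ continuous, C₀ > 0 and M > 0, with Re Ψ̃(y,y) = Φ(y) for all y ∈ V and 2 Re Ψ̃(x,y) ≤ Φ(x) + Φ(y) − (1/C₀)|x−y|² for all x, y ∈ V. Let b : V × V → ℂ be measurable with |b| ≤ M and define Π̃u(x) := h^{−n} ∫_V e^{(2/h)(Ψ̃(x,y) − Ψ̃(y,y))} b(x,y) u(y) dL(y). Let V₁, V₂ be open with V₁ ⋐ V₂ ⋐ V. Then there exist C > 0 and ε > 0 such that for every h ∈ (0,1] and every measurable u : V → ℂ with ‖u‖_{L²_Φ(V)} < ∞: ‖Π̃(1_{V∖V₂} u)‖_{L²_Φ(V₁)} ≤ C e^{−ε/h} ‖u‖_{L²_Φ(V)}, where 1_{V∖V₂} is the indicator function of V ∖ V₂. -/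

import Mathlib

open Complex MeasureTheory

noncomputable section

/-- `ℂⁿ` with its Euclidean (Hermitian) norm. -/
abbrev En (n : ℕ) := EuclideanSpace ℂ (Fin n)

instance (n : ℕ) : MeasurableSpace (En n) := borel _
instance (n : ℕ) : BorelSpace (En n) := ⟨rfl⟩
/-- The real inner product structure, giving Lebesgue measure (`volume`) on `ℂⁿ ≅ ℝ^{2n}`. -/
instance (n : ℕ) : InnerProductSpace ℝ (En n) := InnerProductSpace.rclikeToReal ℂ (En n)

/-- The (possibly infinite) weighted `L²` norm `‖u‖_{L²_Φ(W)}`. -/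
def wNormE (n : ℕ) (W : Set (En n)) (Φ : En n → ℝ) (h : ℝ) (u : En n → ℂ) : ENNReal :=
  (∫⁻ x in W, ENNReal.ofReal (‖u x‖ ^ 2 * Real.exp (-(2 * Φ x) / h))) ^ (1/2 : ℝ)

/-- The Bergman-type operator
`Π̃u(x) = h^{−n} ∫_V e^{(2/h)(Ψ̃(x,y) − Ψ̃(y,y))} b(x,y) u(y) dL(y)`. -/
def PiOp (n : ℕ) (V : Set (En n)) (Ψt b : En n → En n → ℂ) (h : ℝ)
    (u : En n → ℂ) (x : En n) : ℂ :=
  ((h ^ n : ℝ) : ℂ)⁻¹ *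
    ∫ y in V, Complex.exp (((2 / h : ℝ) : ℂ) * (Ψt x y - Ψt y y)) * b x y * u y

/-!
If the `δ`-thickening of `closure V₁` lies in `V₂`, then `|x - y| ≥ δ` for `x ∈ V₁` and
`y ∈ V \ V₂`. The two conditions on `Ψ̃` bound the conjugated kernel
`e^{-Φ(x)/h} |e^{(2/h)(Ψ̃(x,y) - Ψ̃(y,y))}| e^{Φ(y)/h}` by the Gaussian `e^{-|x-y|²/(C₀h)}`, so
Cauchy–Schwarz against the tail of that Gaussian bounds the weighted value of
`Π̃(1_{V∖V₂} u)` at each `x ∈ V₁` by `M h^{-n} e^{-δ²/(2C₀h)} ‖e^{-|z|²/C₀}‖_{L¹}^{1/2} ‖u‖_{L²_Φ}`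
(using `h ≤ 1`). Integrating over `V₁` costs a factor `vol(V₁)^{1/2}`, and `h^{-n}` is absorbed
by half of the exponential decay, `h^{-n} ≤ n! ε^{-n} e^{ε/h}`.
-/

open scoped Nat ENNReal

lemma Real.inv_pow_mul_exp_neg_two_mul_div_le {a h : ℝ} (ha : 0 < a) (hh : 0 < h) (n : ℕ) :
    (h ^ n)⁻¹ * Real.exp (-(2 * a) / h) ≤ n ! * a⁻¹ ^ n * Real.exp (-a / h) := by
  have hpow : (a / h) ^ n * Real.exp (-a / h) ≤ n ! := by
    have := Real.pow_div_factorial_le_exp _ (div_pos ha hh).le n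
    rw [div_le_iff₀ (by positivity)] at this
    calc (a / h) ^ n * Real.exp (-a / h) ≤ Real.exp (a / h) * n ! * Real.exp (-a / h) := by gcongr
      _ = n ! := by rw [neg_div, Real.exp_neg]; field_simp
  calc (h ^ n)⁻¹ * Real.exp (-(2 * a) / h)
      = a⁻¹ ^ n * ((a / h) ^ n * Real.exp (-a / h)) * Real.exp (-a / h) := by
        rw [show -(2 * a) / h = -a / h + -a / h by ring, Real.exp_add, div_pow]
        field_simp
        rw [← mul_pow, one_div, inv_mul_cancel₀ ha.ne', one_pow]
    _ ≤ a⁻¹ ^ n * n ! * Real.exp (-a / h) := by gcongr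
    _ = n ! * a⁻¹ ^ n * Real.exp (-a / h) := by ring

lemma norm_exp_two_div_mul_sub_le {a d : ℂ} {φx φy q h : ℝ} (hh : 0 < h) (hd : d.re = φy)
    (ha : 2 * a.re ≤ φx + φy - q) :
    ‖exp (((2 / h : ℝ) : ℂ) * (a - d))‖
      ≤ Real.exp (φx / h) * Real.exp (-q / h) * Real.exp (-φy / h) := by
  rw [Complex.norm_exp, ← Real.exp_add, ← Real.exp_add, Real.exp_le_exp, Complex.re_ofReal_mul,
    Complex.sub_re, hd, ← add_div, ← add_div, div_mul_eq_mul_div]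
  gcongr
  linarith

section Gaussian

variable {E : Type*} [NormedAddCommGroup E] [InnerProductSpace ℝ E] [FiniteDimensional ℝ E]
  [MeasurableSpace E] [BorelSpace E]

lemma lintegral_exp_neg_mul_sq_norm_lt_top {c : ℝ} (hc : 0 < c) :
    ∫⁻ z : E, ENNReal.ofReal (Real.exp (-(c * ‖z‖ ^ 2))) < ∞ := by
  refine Integrable.lintegral_lt_top ((GaussianFourier.integrable_cexp_neg_mul_sq_norm_add
    (V := E) (b := (c : ℂ)) (by simpa using hc) 0 0).norm.congr (ae_of_all _ fun z => ?_))
  simp only [inner_zero_left, Complex.ofReal_zero, mul_zero, add_zero, Complex.norm_exp]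
  norm_cast
  ring_nf

lemma lintegral_indicator_exp_neg_sq_le {c h δ : ℝ} (hc : 0 < c) (hh : 0 < h) (hh1 : h ≤ 1)
    (hδ : 0 ≤ δ) :
    ∫⁻ z : E,
        {z | δ ≤ ‖z‖}.indicator (fun z => ENNReal.ofReal (Real.exp (-(c * ‖z‖ ^ 2) / h))) z ^ 2
      ≤ ENNReal.ofReal (Real.exp (-(c * δ ^ 2 / 2) / h)) ^ 2
          * ∫⁻ z : E, ENNReal.ofReal (Real.exp (-(c * ‖z‖ ^ 2))) := by
  rw [← lintegral_const_mul' _ _ (by simp)]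
  refine lintegral_mono fun z => ?_
  by_cases hz : δ ≤ ‖z‖
  · rw [Set.indicator_of_mem (show z ∈ {z : E | δ ≤ ‖z‖} from hz),
      ← ENNReal.ofReal_pow (Real.exp_nonneg _), ← ENNReal.ofReal_pow (Real.exp_nonneg _),
      ← ENNReal.ofReal_mul (by positivity), ← Real.exp_nat_mul, ← Real.exp_nat_mul, ← Real.exp_add]
    -- `2 c |z|² / h ≥ c δ² / h + c |z|²` because `|z| ≥ δ` and `h ≤ 1`
    refine ENNReal.ofReal_le_ofReal (Real.exp_le_exp.2 ?_)
    have hδz : c * δ ^ 2 ≤ c * ‖z‖ ^ 2 := by gcongr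
    have hcz : c * ‖z‖ ^ 2 ≤ c * ‖z‖ ^ 2 / h := le_div_self (by positivity) hh hh1
    field_simp
    push_cast
    nlinarith
  · simp [Set.indicator_of_notMem (show z ∉ {z : E | δ ≤ ‖z‖} from hz)]

end Gaussian

lemma ENNReal.sq_mul_rpow_one_half (a b : ℝ≥0∞) :
    (a ^ 2 * b) ^ (1 / 2 : ℝ) = a * b ^ (1 / 2 : ℝ) := by
  rw [ENNReal.mul_rpow_of_nonneg _ _ (by norm_num), ← ENNReal.rpow_two, ← ENNReal.rpow_mul]
  norm_num

lemma setLIntegral_comp_sub_mul_le {G : Type*} [MeasurableSpace G] [AddGroup G]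
    [MeasurableAdd G] {μ : Measure G} [μ.IsAddRightInvariant] {k g : G → ℝ≥0∞} (s : Set G)
    (hk : Measurable k) (hg : AEMeasurable g (μ.restrict s)) (x : G) :
    ∫⁻ y in s, k (y - x) * g y ∂μ
      ≤ (∫⁻ z, k z ^ 2 ∂μ) ^ (1 / 2 : ℝ) * (∫⁻ y in s, g y ^ 2 ∂μ) ^ (1 / 2 : ℝ) := by
  have hk' : AEMeasurable (fun y => k (y - x)) (μ.restrict s) := by
    simp_rw [sub_eq_add_neg]; exact (hk.comp (measurable_add_const (-x))).aemeasurable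
  have hholder := ENNReal.lintegral_mul_le_Lp_mul_Lq (μ.restrict s) Real.HolderConjugate.two_two
    hk' hg
  simp only [ENNReal.rpow_two, Pi.mul_apply] at hholder
  refine hholder.trans (mul_le_mul_left (ENNReal.rpow_le_rpow ?_ (by norm_num)) _)
  calc ∫⁻ y in s, k (y - x) ^ 2 ∂μ ≤ ∫⁻ y, k (y - x) ^ 2 ∂μ := setLIntegral_le_lintegral _ _
    _ = ∫⁻ z, k z ^ 2 ∂μ := lintegral_sub_right_eq_self (fun z => k z ^ 2) x

lemma wNormE_eq_lintegral_sq (n : ℕ) (W : Set (En n)) (Φ : En n → ℝ) (h : ℝ) (u : En n → ℂ) :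
    wNormE n W Φ h u
      = (∫⁻ x in W, ENNReal.ofReal (‖u x‖ * Real.exp (-Φ x / h)) ^ 2) ^ (1 / 2 : ℝ) := by
  refine congrArg (· ^ (1 / 2 : ℝ)) (lintegral_congr fun x => ?_)
  rw [← ENNReal.ofReal_pow (by positivity), mul_pow, ← Real.exp_nat_mul]
  ring_nf

lemma wNormE_le_of_forall_le {n : ℕ} {W : Set (En n)} {Φ : En n → ℝ} {h : ℝ} {u : En n → ℂ}
    {B : ℝ≥0∞} (hB : ∀ x ∈ W, ENNReal.ofReal (‖u x‖ * Real.exp (-Φ x / h)) ≤ B) :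
    wNormE n W Φ h u ≤ B * volume W ^ (1 / 2 : ℝ) := by
  calc wNormE n W Φ h u ≤ (∫⁻ _ in W, B ^ 2) ^ (1 / 2 : ℝ) := by
        rw [wNormE_eq_lintegral_sq]
        exact ENNReal.rpow_le_rpow
          (setLIntegral_mono_ae aemeasurable_const
            (ae_of_all _ fun x hx => pow_le_pow_left' (hB x hx) 2)) (by norm_num)
    _ = B * volume W ^ (1 / 2 : ℝ) := by rw [setLIntegral_const, ENNReal.sq_mul_rpow_one_half]

lemma ofReal_norm_kernel_mul_le {E : Type*} [NormedAddCommGroup E] {Φ : E → ℝ}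
    {Ψt b : E → E → ℂ} {c M h : ℝ} {x y : E} (hh : 0 < h) (hM : 0 ≤ M)
    (hdiag : (Ψt y y).re = Φ y) (hub : 2 * (Ψt x y).re ≤ Φ x + Φ y - c * ‖x - y‖ ^ 2)
    (hbM : ‖b x y‖ ≤ M) (v : E → ℂ) :
    ENNReal.ofReal ‖exp (((2 / h : ℝ) : ℂ) * (Ψt x y - Ψt y y)) * b x y * v y‖
      ≤ ENNReal.ofReal (M * Real.exp (Φ x / h))
        * (ENNReal.ofReal (Real.exp (-(c * ‖y - x‖ ^ 2) / h))
          * ENNReal.ofReal (‖v y‖ * Real.exp (-Φ y / h))) := by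
  have hkernel := norm_exp_two_div_mul_sub_le hh hdiag hub
  rw [norm_sub_rev] at hkernel
  rw [← ENNReal.ofReal_mul (by positivity), ← ENNReal.ofReal_mul (by positivity),
    norm_mul, norm_mul]
  refine ENNReal.ofReal_le_ofReal ?_
  calc _ ≤ Real.exp (Φ x / h) * Real.exp (-(c * ‖y - x‖ ^ 2) / h)
        * Real.exp (-Φ y / h) * M * ‖v y‖ := by gcongr
    _ = _ := by ring

lemma ofReal_norm_PiOp_mul_exp_le {n : ℕ} {V : Set (En n)} {Φ : En n → ℝ}
    {Ψt b : En n → En n → ℂ} {c M h : ℝ} {x : En n} (hV : MeasurableSet V) (hh : 0 < h)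
    (hM : 0 ≤ M) (hdiag : ∀ y ∈ V, (Ψt y y).re = Φ y)
    (hub : ∀ y ∈ V, 2 * (Ψt x y).re ≤ Φ x + Φ y - c * ‖x - y‖ ^ 2)
    (hbM : ∀ y ∈ V, ‖b x y‖ ≤ M) (v : En n → ℂ) :
    ENNReal.ofReal (‖PiOp n V Ψt b h v x‖ * Real.exp (-Φ x / h))
      ≤ ENNReal.ofReal ((h ^ n)⁻¹ * M) * ∫⁻ y in V,
          ENNReal.ofReal (Real.exp (-(c * ‖y - x‖ ^ 2) / h))
            * ENNReal.ofReal (‖v y‖ * Real.exp (-Φ y / h)) := by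
  set T := ∫⁻ y in V,
    ENNReal.ofReal ‖exp (((2 / h : ℝ) : ℂ) * (Ψt x y - Ψt y y)) * b x y * v y‖
  have hnorm : ‖PiOp n V Ψt b h v x‖ ≤ (h ^ n)⁻¹ * T.toReal := by
    rw [PiOp, norm_mul, norm_inv, Complex.norm_real, Real.norm_of_nonneg (by positivity)]
    gcongr
    exact norm_integral_le_lintegral_norm _
  calc ENNReal.ofReal (‖PiOp n V Ψt b h v x‖ * Real.exp (-Φ x / h))
      ≤ ENNReal.ofReal ((h ^ n)⁻¹ * Real.exp (-Φ x / h) * T.toReal) := by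
        rw [mul_right_comm]
        exact ENNReal.ofReal_le_ofReal (mul_le_mul_of_nonneg_right hnorm (Real.exp_nonneg _))
    _ ≤ ENNReal.ofReal ((h ^ n)⁻¹ * Real.exp (-Φ x / h)) * T := by
        rw [ENNReal.ofReal_mul (by positivity)]
        exact mul_le_mul_right ENNReal.ofReal_toReal_le _
    _ ≤ ENNReal.ofReal ((h ^ n)⁻¹ * Real.exp (-Φ x / h))
          * (ENNReal.ofReal (M * Real.exp (Φ x / h)) * ∫⁻ y in V,
            ENNReal.ofReal (Real.exp (-(c * ‖y - x‖ ^ 2) / h))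
              * ENNReal.ofReal (‖v y‖ * Real.exp (-Φ y / h))) := by
        refine mul_le_mul_right ?_ _
        rw [← lintegral_const_mul' _ _ ENNReal.ofReal_ne_top]
        exact setLIntegral_mono' hV fun y hy =>
          ofReal_norm_kernel_mul_le hh hM (hdiag y hy) (hub y hy) (hbM y hy) v
    _ = _ := by
        rw [← mul_assoc, ← ENNReal.ofReal_mul (by positivity)]
        congr 2
        rw [neg_div, Real.exp_neg]
        field_simp

lemma ofReal_norm_PiOp_indicator_mul_exp_le {n : ℕ} {V W : Set (En n)} {Φ : En n → ℝ}
    {Ψt b : En n → En n → ℂ} {c M h δ : ℝ} {x : En n} {u : En n → ℂ} (hV : IsOpen V)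
    (hΦ : ContinuousOn Φ V) (hu : Measurable u) (hc : 0 < c) (hM : 0 ≤ M) (hh : 0 < h)
    (hh1 : h ≤ 1) (hδ : 0 ≤ δ) (hdiag : ∀ y ∈ V, (Ψt y y).re = Φ y)
    (hub : ∀ y ∈ V, 2 * (Ψt x y).re ≤ Φ x + Φ y - c * ‖x - y‖ ^ 2)
    (hbM : ∀ y ∈ V, ‖b x y‖ ≤ M) (hsep : ∀ y ∈ W, δ ≤ ‖y - x‖) :
    ENNReal.ofReal (‖PiOp n V Ψt b h (W.indicator u) x‖ * Real.exp (-Φ x / h))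
      ≤ ENNReal.ofReal ((h ^ n)⁻¹ * M)
        * (ENNReal.ofReal (Real.exp (-(c * δ ^ 2 / 2) / h))
          * (∫⁻ z : En n, ENNReal.ofReal (Real.exp (-(c * ‖z‖ ^ 2)))) ^ (1 / 2 : ℝ)
          * wNormE n V Φ h u) := by
  set k : En n → ℝ≥0∞ :=
    {z | δ ≤ ‖z‖}.indicator fun z => ENNReal.ofReal (Real.exp (-(c * ‖z‖ ^ 2) / h))
  set g : En n → ℝ≥0∞ := fun y => ENNReal.ofReal (‖u y‖ * Real.exp (-Φ y / h))
  have hk : Measurable k :=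
    Measurable.indicator (by fun_prop) (measurableSet_le measurable_const measurable_norm)
  have hg : AEMeasurable g (volume.restrict V) := by
    have hΦm := hΦ.aemeasurable (μ := volume) hV.measurableSet
    fun_prop
  calc _ ≤ ENNReal.ofReal ((h ^ n)⁻¹ * M) * ∫⁻ y in V,
        ENNReal.ofReal (Real.exp (-(c * ‖y - x‖ ^ 2) / h))
          * ENNReal.ofReal (‖W.indicator u y‖ * Real.exp (-Φ y / h)) :=
        ofReal_norm_PiOp_mul_exp_le hV.measurableSet hh hM hdiag hub hbM _
    _ ≤ ENNReal.ofReal ((h ^ n)⁻¹ * M) * ∫⁻ y in V, k (y - x) * g y := by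
        refine mul_le_mul_right (lintegral_mono fun y => ?_) _
        by_cases hy : y ∈ W
        · simp only [k, g, Set.indicator_of_mem hy,
            Set.indicator_of_mem (show y - x ∈ {z | δ ≤ ‖z‖} from hsep y hy), le_refl]
        · simp [hy]
    _ ≤ ENNReal.ofReal ((h ^ n)⁻¹ * M)
          * ((∫⁻ z, k z ^ 2) ^ (1 / 2 : ℝ) * (∫⁻ y in V, g y ^ 2) ^ (1 / 2 : ℝ)) :=
        mul_le_mul_right (setLIntegral_comp_sub_mul_le V hk hg x) _
    _ ≤ _ := by
        rw [wNormE_eq_lintegral_sq]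
        refine mul_le_mul_right (mul_le_mul_left ?_ _) _
        rw [← ENNReal.sq_mul_rpow_one_half]
        exact ENNReal.rpow_le_rpow (lintegral_indicator_exp_neg_sq_le hc hh hh1 hδ) (by norm_num)

lemma exists_pos_le_norm_sub_of_closure_subset {E : Type*} [NormedAddCommGroup E] {s t : Set E}
    (hs : IsCompact (closure s)) (ht : IsOpen t) (hst : closure s ⊆ t) :
    ∃ δ > 0, ∀ x ∈ s, ∀ y ∉ t, δ ≤ ‖y - x‖ := by
  obtain ⟨δ, hδ, hthick⟩ := hs.exists_thickening_subset_open ht hst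
  exact ⟨δ, hδ, fun x hx y hy => not_lt.1 fun hlt =>
    hy (hthick (Metric.mem_thickening_iff.2 ⟨x, subset_closure hx, by rwa [dist_eq_norm]⟩))⟩

theorem statement12_general (n : ℕ)
    (V : Set (En n)) (hV : IsOpen V)
    (Φ : En n → ℝ) (hΦ : ContinuousOn Φ V)
    (Ψt : En n → En n → ℂ)
    (C₀ M : ℝ) (hC₀ : 0 < C₀) (hM : 0 < M)
    (hdiag : ∀ y ∈ V, (Ψt y y).re = Φ y)
    (hub : ∀ x ∈ V, ∀ y ∈ V, 2 * (Ψt x y).re ≤ Φ x + Φ y - (1/C₀) * ‖x - y‖ ^ 2)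
    (b : En n → En n → ℂ)
    (hbM : ∀ x ∈ V, ∀ y ∈ V, ‖b x y‖ ≤ M)
    (V₁ V₂ : Set (En n)) (hV₂ : IsOpen V₂)
    (hV₁c : IsCompact (closure V₁))
    (hV₁₂ : closure V₁ ⊆ V₂) (hV₂V : closure V₂ ⊆ V) :
    ∃ C : ℝ, 0 < C ∧ ∃ ε : ℝ, 0 < ε ∧
      ∀ h ∈ Set.Ioc (0:ℝ) 1, ∀ u : En n → ℂ, Measurable u →
        wNormE n V Φ h u < ⊤ →
        wNormE n V₁ Φ h (PiOp n V Ψt b h ((V \ V₂).indicator u))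
          ≤ ENNReal.ofReal (C * Real.exp (-ε / h)) * wNormE n V Φ h u := by
  obtain ⟨δ, hδ, hsep⟩ := exists_pos_le_norm_sub_of_closure_subset hV₁c hV₂ hV₁₂
  have hV₁V : V₁ ⊆ V := subset_closure.trans (hV₁₂.trans (subset_closure.trans hV₂V))
  set ε := 1 / C₀ * δ ^ 2 / 4
  set A := (∫⁻ z : En n, ENNReal.ofReal (Real.exp (-(1 / C₀ * ‖z‖ ^ 2)))) ^ (1 / 2 : ℝ)
    * volume V₁ ^ (1 / 2 : ℝ)
  have hA : A ≠ ∞ := ENNReal.mul_ne_top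
    (ENNReal.rpow_ne_top_of_nonneg (by norm_num)
      (lintegral_exp_neg_mul_sq_norm_lt_top (by positivity)).ne)
    (ENNReal.rpow_ne_top_of_nonneg (by norm_num)
      ((measure_mono subset_closure).trans_lt hV₁c.measure_lt_top).ne)
  refine ⟨M * n ! * ε⁻¹ ^ n * (A.toReal + 1), by positivity, ε, by positivity, ?_⟩
  rintro h ⟨hh, hh1⟩ u hu -
  have hdecay : M * ((h ^ n)⁻¹ * Real.exp (-(2 * ε) / h))
      ≤ M * (n ! * ε⁻¹ ^ n * Real.exp (-ε / h)) :=
    mul_le_mul_of_nonneg_left (Real.inv_pow_mul_exp_neg_two_mul_div_le (by positivity) hh n) hM.le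
  have hA1 : A ≤ ENNReal.ofReal (A.toReal + 1) :=
    (ENNReal.le_ofReal_iff_toReal_le hA (by positivity)).2 (by linarith)
  calc _ ≤ _ := wNormE_le_of_forall_le fun x hx =>
        ofReal_norm_PiOp_indicator_mul_exp_le hV hΦ hu (by positivity) hM.le hh hh1 hδ.le hdiag
          (hub x (hV₁V hx)) (hbM x (hV₁V hx)) fun y hy => hsep x hx y hy.2
    _ = ENNReal.ofReal (M * ((h ^ n)⁻¹ * Real.exp (-(2 * ε) / h))) * A * wNormE n V Φ h u := by
        rw [show 2 * ε = 1 / C₀ * δ ^ 2 / 2 by ring, ENNReal.ofReal_mul hM.le,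
          ENNReal.ofReal_mul (by positivity), ENNReal.ofReal_mul (by positivity)]
        ring
    _ ≤ ENNReal.ofReal (M * (n ! * ε⁻¹ ^ n * Real.exp (-ε / h))) * ENNReal.ofReal (A.toReal + 1)
          * wNormE n V Φ h u := by gcongr
    _ = _ := by
        rw [← ENNReal.ofReal_mul (by positivity)]
        ring_nf

/-- the contribution to `Π̃u` on `V₁` of the part of `u` living outside
`V₂ ⊋ V₁` is exponentially small, `O(e^{−ε/h})`. -/
theorem statement12 (n : ℕ)
    (V : Set (En n)) (hV : IsOpen V)
    (Φ : En n → ℝ) (hΦ : ContinuousOn Φ V)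
    (Ψt : En n → En n → ℂ)
    (hΨt : ContinuousOn (fun p : En n × En n => Ψt p.1 p.2) (V ×ˢ V))
    (C₀ M : ℝ) (hC₀ : 0 < C₀) (hM : 0 < M)
    (hdiag : ∀ y ∈ V, (Ψt y y).re = Φ y)
    (hub : ∀ x ∈ V, ∀ y ∈ V, 2 * (Ψt x y).re ≤ Φ x + Φ y - (1/C₀) * ‖x - y‖ ^ 2)
    (b : En n → En n → ℂ) (hb : Measurable fun p : En n × En n => b p.1 p.2)
    (hbM : ∀ x ∈ V, ∀ y ∈ V, ‖b x y‖ ≤ M)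
    (V₁ V₂ : Set (En n)) (hV₁ : IsOpen V₁) (hV₂ : IsOpen V₂)
    (hV₁c : IsCompact (closure V₁)) (hV₂c : IsCompact (closure V₂))
    (hV₁₂ : closure V₁ ⊆ V₂) (hV₂V : closure V₂ ⊆ V) :
    ∃ C : ℝ, 0 < C ∧ ∃ ε : ℝ, 0 < ε ∧
      ∀ h ∈ Set.Ioc (0:ℝ) 1, ∀ u : En n → ℂ, Measurable u →
        wNormE n V Φ h u < ⊤ →
        wNormE n V₁ Φ h (PiOp n V Ψt b h ((V \ V₂).indicator u))
          ≤ ENNReal.ofReal (C * Real.exp (-ε / h)) * wNormE n V Φ h u :=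
  statement12_general n V hV Φ hΦ Ψt C₀ M hC₀ hM hdiag hub b hbM V₁ V₂ hV₂ hV₁c hV₁₂ hV₂V

end
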